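/- Symmetrically, under the same hypotheses, √F_P + 2√F_E ≥ 1. -/

import Mathlib

/-!
Adding the two lower bounds gives `logb 2 (4 / ((1 + √F_P)(1 + √F_E))) ≤ 1`, i.e.
`(1 + √F_P)(1 + √F_E) ≥ 2`, i.e. `√F_P + √F_E + √F_P √F_E ≥ 1`; and `√F_P √F_E ≤ √F_E`
unless `√F_P ≥ 1`, in which case the claim is immediate.
-/

open Real

lemma logb_two_div {x : ℝ} (hx : 0 < x) : logb 2 (2 / x) = 1 - logb 2 x := by
  rw [logb_div two_ne_zero hx.ne', logb_self_eq_one one_lt_two]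

lemma two_le_mul_of_logb_two_div_add_le_one {x y : ℝ} (hx : 0 < x) (hy : 0 < y)
    (h : logb 2 (2 / x) + logb 2 (2 / y) ≤ 1) : 2 ≤ x * y := by
  have hlog : logb 2 2 ≤ logb 2 (x * y) := by
    rw [logb_mul hx.ne' hy.ne', logb_self_eq_one one_lt_two]
    rw [logb_two_div hx, logb_two_div hy] at h
    linarith
  exact (logb_le_logb one_lt_two two_pos (mul_pos hx hy)).mp hlog

lemma one_le_add_two_mul_of_two_le_one_add_mul_one_add {a b : ℝ} (hb : 0 ≤ b)
    (h : 2 ≤ (1 + a) * (1 + b)) : 1 ≤ a + 2 * b := by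
  rcases le_total 1 a with ha | ha
  · linarith
  · nlinarith [mul_le_of_le_one_left hb ha]

theorem stmt_2_general (IP IE FP FE : ℝ)
    (hsum : IP + IE ≤ 1)
    (hIP : IP ≥ Real.logb 2 (2 / (1 + Real.sqrt FP)))
    (hIE : IE ≥ Real.logb 2 (2 / (1 + Real.sqrt FE))) :
    Real.sqrt FP + 2 * Real.sqrt FE ≥ 1 := by
  have hprod : 2 ≤ (1 + √FP) * (1 + √FE) :=
    two_le_mul_of_logb_two_div_add_le_one (by positivity) (by positivity) (by linarith)
  exact one_le_add_two_mul_of_two_le_one_add_mul_one_add (sqrt_nonneg FE) hprod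

theorem stmt_2 (IP IE FP FE : ℝ)
    (hFP0 : 0 ≤ FP) (hFP1 : FP ≤ 1) (hFE0 : 0 ≤ FE) (hFE1 : FE ≤ 1)
    (hsum : IP + IE ≤ 1)
    (hIP : IP ≥ Real.logb 2 (2 / (1 + Real.sqrt FP)))
    (hIE : IE ≥ Real.logb 2 (2 / (1 + Real.sqrt FE))) :
    Real.sqrt FP + 2 * Real.sqrt FE ≥ 1 :=
  stmt_2_general IP IE FP FE hsum hIP hIE
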